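/- Let C be a field of characteristic p > 0 and x ∈ 1 + X·C⟦X⟧. The map ℤ_p → 1 + X·C⟦X⟧, α ↦ x^α, is a group homomorphism from (ℤ_p, +) to the multiplicative group 1 + X·C⟦X⟧, i.e. x^{α+β} = x^α · x^β for all α, β ∈ ℤ_p. -/

import Mathlib

/-! Since `x ≡ 1 mod X` and we are in characteristic `p`, `x ^ pⁿ - 1 = (x - 1) ^ pⁿ` is divisible
by `X ^ pⁿ`, so `x ^ a ≡ x ^ b mod X ^ pⁿ` whenever `a ≡ b mod pⁿ`. The representatives
`appr n` are additive modulo `pⁿ`, so for `n` large the approximations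
`x ^ (α + β).appr n` and `x ^ α.appr n * x ^ β.appr n` agree modulo `X ^ m`; hence
`pow (α + β)` and `pow α * pow β` agree modulo every power of `X`. -/

open Filter

section ExpChar

variable {R : Type*} [CommRing R] (p : ℕ) [ExpChar R p] {d y : R}

theorem pow_dvd_pow_expChar_pow_sub_one (h : d ∣ y - 1) (n : ℕ) :
    d ^ p ^ n ∣ y ^ p ^ n - 1 := by
  rw [← one_pow (p ^ n), ← sub_pow_expChar_pow]
  exact pow_dvd_pow_of_dvd h _

theorem pow_dvd_pow_sub_pow_of_modEq (h : d ∣ y - 1) {n a b : ℕ} (hab : a ≡ b [MOD p ^ n]) :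
    d ^ p ^ n ∣ y ^ a - y ^ b := by
  wlog hle : a ≤ b generalizing a b
  · simpa using (this hab.symm (le_of_not_ge hle)).neg_right
  obtain ⟨k, hk⟩ := (Nat.modEq_iff_dvd' hle).1 hab
  have hb : b = a + p ^ n * k := by omega
  rw [hb, pow_add, ← neg_sub, ← mul_sub_one]
  exact ((pow_dvd_pow_expChar_pow_sub_one p h n).trans
    (pow_one_sub_dvd_pow_mul_sub_one y _ k)).mul_left _ |>.neg_right

end ExpChar

theorem PadicInt.appr_add_modEq {p : ℕ} [Fact p.Prime] (n : ℕ) (α β : ℤ_[p]) :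
    (α + β).appr n ≡ α.appr n + β.appr n [MOD p ^ n] := by
  rw [← ZMod.natCast_eq_natCast_iff, Nat.cast_add]
  exact map_add (toZModPow n) α β

theorem PowerSeries.eq_of_forall_X_pow_dvd_sub {R : Type*} [CommRing R] {f g : PowerSeries R}
    (h : ∀ m, X ^ m ∣ f - g) : f = g := by
  ext i
  rw [← sub_eq_zero, ← map_sub]
  exact X_pow_dvd_iff.1 (h (i + 1)) i i.lt_succ_self

/-- **`α ↦ x^α` is a homomorphism `(ℤ_p, +) → (1 + X·C⟦X⟧, ·)`.**
Let `C` be a field of characteristic `p > 0` and `x ∈ 1 + X·C⟦X⟧`.  Suppose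
`pow : ℤ_p → C⟦X⟧` sends each `α` to the `X`-adic limit of the partial products
`Π_{i=0}^{n-1} x^{αᵢ pⁱ} = x^(α mod pⁿ)` (here `α.appr n = Σ_{i<n} αᵢ pⁱ` is the canonical
representative of `α` modulo `pⁿ` given by its `p`-adic digits).  Then
`pow (α + β) = pow α * pow β` for all `α, β ∈ ℤ_p`. -/
theorem padic_power_is_group_hom {C : Type*} [Field C] (p : ℕ) [Fact p.Prime] [CharP C p]
    (x : PowerSeries C) (hx : PowerSeries.constantCoeff x = 1)
    (pow : ℤ_[p] → PowerSeries C)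
    (hpow : ∀ (α : ℤ_[p]) (m : ℕ), ∃ N : ℕ, ∀ n ≥ N,
      (PowerSeries.X : PowerSeries C) ^ m ∣ (pow α - x ^ α.appr n)) :
    ∀ α β : ℤ_[p], pow (α + β) = pow α * pow β := by
  intro α β
  have : ExpChar (PowerSeries C) p := expChar_of_injective_ringHom PowerSeries.C_injective p
  have hX : PowerSeries.X ∣ x - 1 := PowerSeries.X_dvd_iff.2 (by simp [hx])
  refine PowerSeries.eq_of_forall_X_pow_dvd_sub fun m ↦ ?_
  obtain ⟨n, hαβ, hα, hβ, hmn⟩ := ((eventually_atTop.2 (hpow (α + β) m)).and <|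
    (eventually_atTop.2 (hpow α m)).and <|
    (eventually_atTop.2 (hpow β m)).and <| eventually_ge_atTop m).exists
  have hcarry : PowerSeries.X ^ m ∣ x ^ (α + β).appr n - x ^ α.appr n * x ^ β.appr n := by
    rw [← pow_add]
    exact (pow_dvd_pow _ (hmn.trans (Nat.lt_pow_self (Fact.out : p.Prime).one_lt).le)).trans
      (pow_dvd_pow_sub_pow_of_modEq p hX (PadicInt.appr_add_modEq n α β))
  have hsplit : pow (α + β) - pow α * pow β = (pow (α + β) - x ^ (α + β).appr n)
      + (x ^ (α + β).appr n - x ^ α.appr n * x ^ β.appr n)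
      - (pow α * pow β - x ^ α.appr n * x ^ β.appr n) := by ring
  rw [hsplit]
  exact (hαβ.add hcarry).sub (dvd_mul_sub_mul hα hβ)
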